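/- arXiv:1711.00082 — 3 statements merged into one kernel-verified Lean document; each statement's English description precedes it below -/
import Mathlib

section
/- Let Z ∈ M_n(ℂ) be a complex symmetric matrix (Zᵗ = Z) such that I_n − ZZ* is positive definite. Then there exist A ∈ U(n) and a diagonal matrix D ∈ M_n(ℝ) with all diagonal entries in [0,1) such that Z = A·D·Aᵗ. -/
/-!
Every complex symmetric matrix has a Takagi factorization `Z = A D Aᵀ` with `A` unitary and
`D` real, nonnegative and diagonal. Since `Z̄ = Zᴴ`, the antilinear map `x ↦ Z x̄` squares to the
positive semidefinite `Z Zᴴ`, so from an eigenvector `u` of `Z Zᴴ` with eigenvalue `σ²` one gets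
a unit vector `v` with `Z v̄ = σ v` (normalize `Z ū + σ u`, or take `i u` if that vanishes).
Completing `v` to a unitary `U` makes `Uᴴ Z Ū` block diagonal with corner `σ`, and we induct on
the size. Then `1 - Z Zᴴ = A (1 - D²) Aᴴ`, so positive definiteness forces `D < 1`.
-/

open scoped Matrix ComplexOrder

namespace Matrix

lemma star_mulVec_eq_map_star {m n R : Type*} [Fintype n] [CommSemiring R] [StarRing R]
    (M : Matrix m n R) (x : n → R) : star (M *ᵥ x) = M.map star *ᵥ star x := by
  rw [star_mulVec, ← vecMul_transpose]
  rfl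

variable {α β : Type*} [Fintype α] [Fintype β]

lemma exists_ne_zero_mulVec_star_eq_smul {Z : Matrix α α ℂ} {u : α → ℂ} (hu : u ≠ 0) {σ : ℝ}
    (h : Z *ᵥ star (Z *ᵥ star u) = ((σ ^ 2 : ℝ) : ℂ) • u) :
    ∃ w ≠ 0, Z *ᵥ star w = (σ : ℂ) • w := by
  by_cases h0 : Z *ᵥ star u + (σ : ℂ) • u = 0
  · refine ⟨Complex.I • u, smul_ne_zero Complex.I_ne_zero hu, ?_⟩
    rw [star_smul, mulVec_smul, eq_neg_of_add_eq_zero_left h0, smul_comm, Complex.star_def,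
      Complex.conj_I]
    simp
  · refine ⟨_, h0, ?_⟩
    rw [star_add, star_smul, mulVec_add, mulVec_smul, h, Complex.star_def, Complex.conj_ofReal,
      smul_add, smul_smul]
    push_cast
    rw [add_comm, sq]

variable [DecidableEq α] [DecidableEq β]

lemma exists_norm_eq_one_mulVec_star_eq_smul [Nonempty α] {Z : Matrix α α ℂ} (hZ : Zᵀ = Z) :
    ∃ σ : ℝ, 0 ≤ σ ∧ ∃ v : EuclideanSpace ℂ α, ‖v‖ = 1 ∧ Z *ᵥ star ⇑v = (σ : ℂ) • ⇑v := by
  have hZZ := posSemidef_self_mul_conjTranspose Z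
  let i : α := Classical.arbitrary α
  have hu : ⇑(hZZ.1.eigenvectorBasis i) ≠ 0 := by
    have := hZZ.1.eigenvectorBasis.orthonormal.ne_zero i
    contrapose! this
    exact WithLp.ofLp_injective _ this
  have hsq : Z *ᵥ star (Z *ᵥ star ⇑(hZZ.1.eigenvectorBasis i)) =
      ((√(hZZ.1.eigenvalues i) ^ 2 : ℝ) : ℂ) • ⇑(hZZ.1.eigenvectorBasis i) := by
    rw [star_mulVec_eq_map_star, star_star, ← transpose_conjTranspose, hZ, mulVec_mulVec,
      hZZ.1.mulVec_eigenvectorBasis, Real.sq_sqrt (hZZ.eigenvalues_nonneg i), Complex.coe_smul]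
  obtain ⟨w, hw0, hw⟩ := exists_ne_zero_mulVec_star_eq_smul hu hsq
  have hw0' : WithLp.toLp 2 w ≠ 0 := fun h => hw0 (congrArg WithLp.ofLp h)
  refine ⟨√(hZZ.1.eigenvalues i), Real.sqrt_nonneg _,
    ‖WithLp.toLp 2 w‖⁻¹ • WithLp.toLp 2 w, norm_smul_inv_norm hw0', ?_⟩
  rw [WithLp.ofLp_smul, WithLp.ofLp_toLp, star_smul, star_trivial, mulVec_smul, hw, smul_comm]

lemma exists_mem_unitaryGroup_mulVec_single {𝕜 : Type*} [RCLike 𝕜] (v : EuclideanSpace 𝕜 α)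
    (hv : ‖v‖ = 1) (i : α) : ∃ U ∈ unitaryGroup α 𝕜, U *ᵥ Pi.single i 1 = ⇑v := by
  have hv' : Orthonormal 𝕜 (({i} : Set α).domRestrict fun _ => v) := by
    rw [orthonormal_iff_ite]
    rintro ⟨j, rfl⟩ ⟨k, rfl⟩
    simp [Set.domRestrict, inner_self_eq_norm_sq_to_K, hv]
  obtain ⟨b, hb⟩ :=
    hv'.exists_orthonormalBasis_extension_of_card_eq (finrank_euclideanSpace (𝕜 := 𝕜) (ι := α))
  refine ⟨_, (EuclideanSpace.basisFun α 𝕜).toMatrix_orthonormalBasis_mem_unitary b, ?_⟩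
  rw [mulVec_single_one, ← hb i rfl]
  rfl

lemma conjTranspose_mul_mul_map_star_mulVec_single {𝕜 : Type*} [RCLike 𝕜] {Z U : Matrix α α 𝕜}
    (hU : U ∈ unitaryGroup α 𝕜) {i : α} {σ : 𝕜}
    (h : Z *ᵥ star (U *ᵥ Pi.single i 1) = σ • U *ᵥ Pi.single i 1) :
    (Uᴴ * Z * U.map star) *ᵥ Pi.single i 1 = σ • Pi.single i 1 := by
  have hUbar : U.map star *ᵥ Pi.single i 1 = star (U *ᵥ Pi.single i 1) := by
    rw [star_mulVec_eq_map_star]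
    simp
  rw [← mulVec_mulVec, ← mulVec_mulVec, hUbar, h, mulVec_smul, mulVec_mulVec,
    ← star_eq_conjTranspose, mem_unitaryGroup_iff'.mp hU, one_mulVec]

lemma eq_fromBlocks_of_mulVec_single_inr {R : Type*} [CommSemiring R]
    {W : Matrix (α ⊕ PUnit) (α ⊕ PUnit) R} (hW : Wᵀ = W) {σ : R}
    (h : W *ᵥ Pi.single (Sum.inr .unit) 1 = σ • Pi.single (Sum.inr .unit) 1) :
    W = fromBlocks W.toBlocks₁₁ 0 0 (diagonal fun _ => σ) := by
  have hcol : ∀ k, W k (Sum.inr .unit) = (σ • Pi.single (Sum.inr .unit) 1 : α ⊕ PUnit → R) k := by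
    intro k
    rw [← h, mulVec_single_one]
    rfl
  conv_lhs => rw [← fromBlocks_toBlocks W]
  congr 1
  · ext i j
    rw [toBlocks₁₂, of_apply, hcol]; simp
  · ext i j
    rw [toBlocks₂₁, of_apply, ← hW, transpose_apply, hcol]; simp
  · ext i j
    rw [toBlocks₂₂, of_apply, hcol]; simp

def HasTakagiFactorization (Z : Matrix α α ℂ) : Prop :=
  ∃ A ∈ unitaryGroup α ℂ, ∃ d : α → ℝ, 0 ≤ d ∧ Z = A * diagonal (fun i => (d i : ℂ)) * Aᵀ

lemma hasTakagiFactorization_diagonal {d : α → ℝ} (hd : 0 ≤ d) :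
    (diagonal fun i => (d i : ℂ)).HasTakagiFactorization :=
  ⟨1, one_mem _, d, hd, by simp⟩

namespace HasTakagiFactorization

variable {Z : Matrix α α ℂ}

lemma unitary_mul_mul_transpose {U : Matrix α α ℂ} (hU : U ∈ unitaryGroup α ℂ)
    (h : Z.HasTakagiFactorization) : (U * Z * Uᵀ).HasTakagiFactorization := by
  obtain ⟨A, hA, d, hd, rfl⟩ := h
  exact ⟨U * A, mul_mem hU hA, d, hd, by simp only [transpose_mul, Matrix.mul_assoc]⟩

lemma of_conjTranspose_mul_mul_map_star {U : Matrix α α ℂ} (hU : U ∈ unitaryGroup α ℂ)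
    (h : (Uᴴ * Z * U.map star).HasTakagiFactorization) : Z.HasTakagiFactorization := by
  have hUUt : U.map star * Uᵀ = 1 := by
    rw [← conjTranspose_transpose, ← transpose_mul, ← star_eq_conjTranspose,
      mem_unitaryGroup_iff.mp hU, transpose_one]
  convert h.unitary_mul_mul_transpose hU using 1
  rw [← Matrix.mul_assoc, ← Matrix.mul_assoc, ← star_eq_conjTranspose,
    mem_unitaryGroup_iff.mp hU, Matrix.one_mul, Matrix.mul_assoc, hUUt, Matrix.mul_one]

lemma reindex (e : α ≃ β) (h : Z.HasTakagiFactorization) :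
    (reindex e e Z).HasTakagiFactorization := by
  obtain ⟨A, hA, d, hd, rfl⟩ := h
  refine ⟨reindex e e A, ?_, d ∘ e.symm, fun i => hd _, ?_⟩
  · rw [mem_unitaryGroup_iff', star_eq_conjTranspose, conjTranspose_reindex]
    simp [submatrix_mul_equiv, ← star_eq_conjTranspose, mem_unitaryGroup_iff'.mp hA]
  · have hD : (diagonal fun i => ((d ∘ e.symm) i : ℂ)) =
        (diagonal fun i => (d i : ℂ)).submatrix e.symm e.symm :=
      (submatrix_diagonal_equiv (fun i => (d i : ℂ)) e.symm).symm
    simp only [hD, reindex_apply, transpose_submatrix, submatrix_mul_equiv]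

lemma fromBlocks {Z₁ : Matrix α α ℂ} {Z₂ : Matrix β β ℂ} (h₁ : Z₁.HasTakagiFactorization)
    (h₂ : Z₂.HasTakagiFactorization) : (Matrix.fromBlocks Z₁ 0 0 Z₂).HasTakagiFactorization := by
  obtain ⟨A₁, hA₁, d₁, hd₁, rfl⟩ := h₁
  obtain ⟨A₂, hA₂, d₂, hd₂, rfl⟩ := h₂
  refine ⟨Matrix.fromBlocks A₁ 0 0 A₂, ?_, Sum.elim d₁ d₂, ?_, ?_⟩
  · rw [mem_unitaryGroup_iff', star_eq_conjTranspose, fromBlocks_conjTranspose,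
      fromBlocks_multiply]
    simp [← star_eq_conjTranspose, mem_unitaryGroup_iff'.mp hA₁, mem_unitaryGroup_iff'.mp hA₂]
  · rintro (i | i)
    exacts [hd₁ i, hd₂ i]
  · have hD : (diagonal fun i => ((Sum.elim d₁ d₂ i : ℝ) : ℂ)) =
        Matrix.fromBlocks (diagonal fun i => (d₁ i : ℂ)) 0 0 (diagonal fun i => (d₂ i : ℂ)) := by
      rw [fromBlocks_diagonal]
      congr 1
      ext (i | i) <;> rfl
    rw [hD, fromBlocks_transpose, fromBlocks_multiply, fromBlocks_multiply]
    simp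

end HasTakagiFactorization

lemma hasTakagiFactorization_of_sum_punit
    (ih : ∀ Z : Matrix α α ℂ, Zᵀ = Z → Z.HasTakagiFactorization)
    {Z : Matrix (α ⊕ PUnit) (α ⊕ PUnit) ℂ} (hZ : Zᵀ = Z) : Z.HasTakagiFactorization := by
  obtain ⟨σ, hσ, v, hv, hZv⟩ := exists_norm_eq_one_mulVec_star_eq_smul hZ
  obtain ⟨U, hU, hUv⟩ := exists_mem_unitaryGroup_mulVec_single v hv (Sum.inr .unit)
  refine .of_conjTranspose_mul_mul_map_star hU ?_
  have hW : (Uᴴ * Z * U.map star)ᵀ = Uᴴ * Z * U.map star := by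
    rw [transpose_mul, transpose_mul, hZ, ← conjTranspose_transpose, transpose_transpose,
      conjTranspose_transpose, Matrix.mul_assoc]
  have hcol := conjTranspose_mul_mul_map_star_mulVec_single hU (hUv ▸ hZv)
  rw [eq_fromBlocks_of_mulVec_single_inr hW hcol]
  refine .fromBlocks (ih _ ?_) (hasTakagiFactorization_diagonal fun _ => hσ)
  ext i j
  exact (congrFun (congrFun hW (.inl j)) (.inl i)).symm

theorem hasTakagiFactorization_of_transpose_eq (Z : Matrix α α ℂ) (hZ : Zᵀ = Z) :
    Z.HasTakagiFactorization := by
  revert Z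
  refine Fintype.induction_empty_option (P := fun α _ => ∀ [DecidableEq α] (Z : Matrix α α ℂ),
    Zᵀ = Z → Z.HasTakagiFactorization) ?_ ?_ ?_ α
  · intro α β _ e h _ Z hZ
    classical
    let := Fintype.ofEquiv β e.symm
    simpa using (h (reindex e.symm e.symm Z) (by rw [transpose_reindex, hZ])).reindex e
  · intro _ Z _
    exact ⟨1, one_mem _, 0, le_rfl, Subsingleton.elim _ _⟩
  · intro α _ ih _ Z hZ
    classical
    let e : Option α ≃ α ⊕ PUnit.{1} := Equiv.optionEquivSumPUnit α
    simpa using (hasTakagiFactorization_of_sum_punit (fun Z' hZ' => ih Z' hZ')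
      (Z := reindex e e Z) (by rw [transpose_reindex, hZ])).reindex e.symm

lemma mul_mul_transpose_mul_conjTranspose {A : Matrix α α ℂ} (hA : A ∈ unitaryGroup α ℂ)
    (D : Matrix α α ℂ) : A * D * Aᵀ * (A * D * Aᵀ)ᴴ = A * (D * Dᴴ) * star A := by
  have hAt : Aᵀ * Aᵀᴴ = 1 := by
    rw [transpose_conjTranspose, ← conjTranspose_transpose, ← transpose_mul,
      ← star_eq_conjTranspose, mem_unitaryGroup_iff'.mp hA, transpose_one]
  simp only [conjTranspose_mul, star_eq_conjTranspose, Matrix.mul_assoc]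
  rw [← Matrix.mul_assoc Aᵀ, hAt, Matrix.one_mul]

lemma lt_one_of_posDef_one_sub_mul_conjTranspose {A Z : Matrix α α ℂ}
    (hA : A ∈ unitaryGroup α ℂ) {d : α → ℝ} (hZ : Z = A * diagonal (fun i => (d i : ℂ)) * Aᵀ)
    (h : (1 - Z * Zᴴ).PosDef) (i : α) : d i < 1 := by
  have hA1 : (1 : Matrix α α ℂ) = A * 1 * star A := by
    rw [Matrix.mul_one, mem_unitaryGroup_iff.mp hA]
  rw [hZ, mul_mul_transpose_mul_conjTranspose hA, diagonal_conjTranspose, diagonal_mul_diagonal]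
    at h
  nth_rewrite 1 [hA1] at h
  rw [← Matrix.sub_mul, ← Matrix.mul_sub, ← diagonal_one, diagonal_sub,
    IsUnit.posDef_star_right_conjugate_iff (Unitary.isUnit_coe (U := ⟨A, hA⟩)),
    posDef_diagonal_iff] at h
  have hi : (d i : ℂ) * d i < 1 := by simpa using h i
  norm_cast at hi
  nlinarith

end Matrix

/-- **KA-decomposition for the type III domain.**
Let `Z` be a complex symmetric `n × n` matrix (`Zᵀ = Z`) such that `I_n - Z Z*` is
positive definite. Then there exist a unitary matrix `A ∈ U(n)` and a real diagonal
matrix `D` with diagonal entries in `[0,1)` such that `Z = A ⬝ D ⬝ Aᵀ`. -/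
theorem typeIII_KA_decomposition (n : ℕ)
    (Z : Matrix (Fin n) (Fin n) ℂ) (hsym : Zᵀ = Z) (hZ : (1 - Z * Zᴴ).PosDef) :
    ∃ A ∈ Matrix.unitaryGroup (Fin n) ℂ, ∃ d : Fin n → ℝ,
      (∀ i, 0 ≤ d i ∧ d i < 1) ∧
        Z = A * Matrix.diagonal (fun i => (d i : ℂ)) * Aᵀ := by
  obtain ⟨A, hA, d, hd, hZA⟩ := Matrix.hasTakagiFactorization_of_transpose_eq Z hsym
  exact ⟨A, hA, d, fun i => ⟨hd i, Matrix.lt_one_of_posDef_one_sub_mul_conjTranspose hA hZA hZ i⟩,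
    hZA⟩
end

section
/- Let m = 2n + ε with n ≥ 1 and ε ∈ {0,1}, and let Z ∈ M_m(ℂ) be skew-symmetric (Zᵗ = −Z) with I_m − ZZ* positive definite. Then there exist A ∈ U(m) and t₁,…,t_n ∈ [0,1) such that Z = A·D(t)·Aᵗ, where D(t) ∈ M_m(ℂ) is the block-diagonal matrix whose j-th 2×2 diagonal block (for j = 1,…,n, starting from the upper-left corner) is [[0, t_j],[−t_j, 0]] and, when ε = 1, whose last row and column are zero. -/
/-!
`Z Zᴴ` is Hermitian and positive semidefinite. If `Z ≠ 0`, take a unit eigenvector `u` of `Z Zᴴ`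
with eigenvalue `σ² > 0` and put `v = σ⁻¹ Z ū`. Skew-symmetry gives `Z v̄ = -σ u`, `|v| = 1` and
`v ⊥ u`, so completing `(v, u)` to a unitary matrix `A` makes `A⁻¹ Z (A⁻¹)ᵀ` block diagonal with
first block `[[0, σ], [-σ, 0]]`. The condition `ZZ* < 1` is invariant under `Z ↦ A Z Aᵀ`, hence
holds for both blocks, which forces `σ < 1` and lets us induct on `n`. Once all `n` blocks have
been split off, a skew-symmetric matrix of size `ε ≤ 1` remains, and it is zero.
-/

open scoped Matrix ComplexOrder

/-- The block-diagonal skew-symmetric matrix `D(t)` of size `m = 2n + ε`, whose `j`-th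
`2 × 2` diagonal block is `[[0, t j], [-t j, 0]]` (and whose last row and column vanish
when `ε = 1`). -/
noncomputable def typeIIBlockDiag (n ε : ℕ) (t : Fin n → ℝ) :
    Matrix (Fin (2 * n + ε)) (Fin (2 * n + ε)) ℂ :=
  Matrix.of fun i j =>
    if h : (i : ℕ) % 2 = 0 ∧ (j : ℕ) = (i : ℕ) + 1 ∧ (i : ℕ) / 2 < n then
      (t ⟨(i : ℕ) / 2, h.2.2⟩ : ℂ)
    else if h' : (j : ℕ) % 2 = 0 ∧ (i : ℕ) = (j : ℕ) + 1 ∧ (j : ℕ) / 2 < n then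
      -(t ⟨(j : ℕ) / 2, h'.2.2⟩ : ℂ)
    else 0

open Matrix

namespace Matrix

lemma eq_zero_of_transpose_eq_neg {R κ : Type*} [Ring R] [NoZeroDivisors R] [CharZero R]
    [Subsingleton κ] {Z : Matrix κ κ R} (hskew : Zᵀ = -Z) : Z = 0 := by
  ext i j
  obtain rfl := Subsingleton.elim i j
  have h := congrFun₂ hskew i i
  simp only [transpose_apply, neg_apply] at h
  simpa using CharZero.eq_neg_self_iff.mp h

lemma dotProduct_mulVec_self_eq_zero {R κ : Type*} [CommRing R] [NoZeroDivisors R]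
    [CharZero R] [Fintype κ] {Z : Matrix κ κ R} (hskew : Zᵀ = -Z) (x : κ → R) :
    x ⬝ᵥ (Z *ᵥ x) = 0 := by
  have h : x ⬝ᵥ (Z *ᵥ x) = -(x ⬝ᵥ (Z *ᵥ x)) := by
    conv_lhs => rw [dotProduct_mulVec, ← mulVec_transpose, hskew, neg_mulVec, neg_dotProduct,
      dotProduct_comm]
  exact CharZero.eq_neg_self_iff.mp h

lemma exists_fromCols_mem_unitaryGroup {𝕜 m ι : Type*} [RCLike 𝕜] [Fintype m]
    [DecidableEq m] [Fintype ι] [DecidableEq ι] (F : Matrix (m ⊕ ι) m 𝕜) (hF : Fᴴ * F = 1) :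
    ∃ G : Matrix (m ⊕ ι) ι 𝕜, fromCols F G ∈ unitaryGroup (m ⊕ ι) 𝕜 := by
  let v : m ⊕ ι → EuclideanSpace 𝕜 (m ⊕ ι) := Sum.elim (fun a => WithLp.toLp 2 (Fᵀ a)) 0
  have hv : Orthonormal 𝕜 ((Set.range Sum.inl).domRestrict v) := by
    rw [orthonormal_iff_ite]
    rintro ⟨_, a, rfl⟩ ⟨_, b, rfl⟩
    rw [Set.domRestrict_apply, Set.domRestrict_apply]
    simp only [v, Sum.elim_inl, EuclideanSpace.inner_toLp_toLp]
    convert congrFun₂ hF a b using 1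
    · simp [dotProduct, mul_apply, mul_comm]
    · rw [one_apply]
      exact if_congr (Subtype.ext_iff.trans Sum.inl_injective.eq_iff) rfl rfl
  obtain ⟨b, hb⟩ := hv.exists_orthonormalBasis_extension_of_card_eq (by simp)
  let A := (EuclideanSpace.basisFun (m ⊕ ι) 𝕜).toBasis.toMatrix b
  have hA : A.toCols₁ = F := by
    ext i a
    simp [A, Module.Basis.toMatrix_apply, hb _ (Set.mem_range_self a), v]
  refine ⟨A.toCols₂, ?_⟩
  rw [← hA, fromCols_toCols]
  exact (EuclideanSpace.basisFun (m ⊕ ι) 𝕜).toMatrix_orthonormalBasis_mem_unitary b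

end Matrix

def skewBlock (σ : ℝ) : Matrix (Fin 2) (Fin 2) ℂ := !![0, σ; -σ, 0]

section

variable {κ ι : Type*} [Fintype κ] [DecidableEq κ] [Fintype ι] [DecidableEq ι]

def typeIIDomain (κ : Type*) [Fintype κ] [DecidableEq κ] : Set (Matrix κ κ ℂ) :=
  {Z | Zᵀ = -Z ∧ (1 - Z * Zᴴ).PosDef}

def UnitarilyCongruent (Z W : Matrix κ κ ℂ) : Prop :=
  ∃ A ∈ unitaryGroup κ ℂ, Z = A * W * Aᵀ

namespace UnitarilyCongruent

lemma refl (Z : Matrix κ κ ℂ) : UnitarilyCongruent Z Z :=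
  ⟨1, one_mem _, by simp⟩

lemma trans {Z W V : Matrix κ κ ℂ} (h₁ : UnitarilyCongruent Z W)
    (h₂ : UnitarilyCongruent W V) : UnitarilyCongruent Z V := by
  obtain ⟨A, hA, rfl⟩ := h₁
  obtain ⟨B, hB, rfl⟩ := h₂
  exact ⟨A * B, mul_mem hA hB, by simp [transpose_mul, Matrix.mul_assoc]⟩

lemma symm {Z W : Matrix κ κ ℂ} (h : UnitarilyCongruent Z W) : UnitarilyCongruent W Z := by
  obtain ⟨A, hA, rfl⟩ := h
  refine ⟨star A, Unitary.star_mem hA, ?_⟩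
  calc W = (star A * A) * W * (star A * A)ᵀ := by simp [mem_unitaryGroup_iff'.mp hA]
    _ = star A * (A * W * Aᵀ) * (star A)ᵀ := by simp only [transpose_mul, Matrix.mul_assoc]

lemma mem_typeIIDomain {Z W : Matrix κ κ ℂ} (h : UnitarilyCongruent Z W)
    (hW : W ∈ typeIIDomain κ) : Z ∈ typeIIDomain κ := by
  obtain ⟨A, hA, rfl⟩ := h
  obtain ⟨hskew, hpos⟩ := hW
  have hAt : Aᵀ * (Aᵀ)ᴴ = 1 := by
    simpa [star_eq_conjTranspose] using
      mem_unitaryGroup_iff.mp (transpose_mem_unitaryGroup_iff.mpr hA)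
  have hdefect : 1 - A * W * Aᵀ * (A * W * Aᵀ)ᴴ = A * (1 - W * Wᴴ) * star A := by
    rw [Matrix.mul_sub, Matrix.sub_mul, Matrix.mul_one, mem_unitaryGroup_iff.mp hA,
      conjTranspose_mul, conjTranspose_mul, star_eq_conjTranspose]
    simp only [Matrix.mul_assoc]
    rw [← Matrix.mul_assoc Aᵀ, hAt, Matrix.one_mul]
  refine ⟨by simp [transpose_mul, hskew, Matrix.mul_assoc], ?_⟩
  rw [hdefect]
  exact (IsUnit.posDef_star_right_conjugate_iff (Unitary.isUnit_coe (U := ⟨A, hA⟩))).mpr hpos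

lemma fromBlocks_right {m : Type*} [Fintype m] [DecidableEq m] (J : Matrix m m ℂ)
    {Z W : Matrix ι ι ℂ} (h : UnitarilyCongruent Z W) :
    UnitarilyCongruent (fromBlocks J 0 0 Z) (fromBlocks J 0 0 W) := by
  obtain ⟨A, hA, rfl⟩ := h
  refine ⟨fromBlocks 1 0 0 A, ?_, ?_⟩
  · rw [mem_unitaryGroup_iff, star_eq_conjTranspose, fromBlocks_conjTranspose,
      fromBlocks_multiply]
    simp [← star_eq_conjTranspose, mem_unitaryGroup_iff.mp hA]
  · simp [fromBlocks_transpose, fromBlocks_multiply]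

lemma submatrix (e : ι ≃ κ) {Z W : Matrix κ κ ℂ} (h : UnitarilyCongruent Z W) :
    UnitarilyCongruent (Z.submatrix e e) (W.submatrix e e) := by
  obtain ⟨A, hA, rfl⟩ := h
  refine ⟨A.submatrix e e, ?_, ?_⟩
  · rw [mem_unitaryGroup_iff, star_eq_conjTranspose, conjTranspose_submatrix,
      submatrix_mul_equiv, ← star_eq_conjTranspose, mem_unitaryGroup_iff.mp hA,
      submatrix_one_equiv]
  · rw [transpose_submatrix, submatrix_mul_equiv, submatrix_mul_equiv]

end UnitarilyCongruent

lemma submatrix_mem_typeIIDomain (e : ι ≃ κ) {Z : Matrix κ κ ℂ}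
    (hZ : Z ∈ typeIIDomain κ) : Z.submatrix e e ∈ typeIIDomain ι := by
  obtain ⟨hskew, hpos⟩ := hZ
  refine ⟨by rw [transpose_submatrix, hskew]; rfl, ?_⟩
  convert hpos.submatrix e.injective using 1
  rw [conjTranspose_submatrix, submatrix_mul_equiv, ← submatrix_one_equiv e]
  rfl

lemma fromBlocks_mem_typeIIDomain {σ : ℝ} (hσ : 0 ≤ σ) {Z : Matrix ι ι ℂ}
    (h : fromBlocks (skewBlock σ) 0 0 Z ∈ typeIIDomain (Fin 2 ⊕ ι)) :
    σ < 1 ∧ Z ∈ typeIIDomain ι := by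
  obtain ⟨hskew, hpos⟩ := h
  refine ⟨?_, ?_, ?_⟩
  · have h₀₀ := hpos.diag_pos (i := .inl 0)
    simp [Matrix.mul_apply, Fintype.sum_sum_type, skewBlock, Fin.sum_univ_two] at h₀₀
    have hσσ : σ * σ < 1 := mod_cast h₀₀
    nlinarith
  · simpa [fromBlocks_transpose, fromBlocks_neg] using congrArg toBlocks₂₂ hskew
  · convert hpos.submatrix Sum.inr_injective using 1
    ext i j
    simp [Matrix.mul_apply, Fintype.sum_sum_type, Matrix.one_apply]

lemma exists_singular_pair_of_transpose_eq_neg {Z : Matrix κ κ ℂ} (hskew : Zᵀ = -Z)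
    (hZ : Z ≠ 0) :
    ∃ σ : ℝ, 0 < σ ∧ ∃ u v : κ → ℂ, star u ⬝ᵥ u = 1 ∧
      Z *ᵥ star u = (σ : ℂ) • v ∧ Z *ᵥ star v = -(σ : ℂ) • u := by
  have hH := isHermitian_mul_conjTranspose_self Z
  obtain ⟨i, hi⟩ : ∃ i, hH.eigenvalues i ≠ 0 := by
    by_contra! h
    exact hZ (self_mul_conjTranspose_eq_zero.mp (hH.eigenvalues_eq_zero_iff.mp (funext h)))
  set μ := hH.eigenvalues i
  have hμ : 0 < μ := ((posSemidef_self_mul_conjTranspose Z).eigenvalues_nonneg i).lt_of_ne' hi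
  set σ := √μ
  have hσ : (σ : ℂ) ≠ 0 := by exact_mod_cast (Real.sqrt_pos.mpr hμ).ne'
  set u : κ → ℂ := (hH.eigenvectorBasis i).ofLp
  have hu : star u ⬝ᵥ u = 1 := by
    have h := orthonormal_iff_ite.mp hH.eigenvectorBasis.orthonormal i i
    rwa [EuclideanSpace.inner_eq_star_dotProduct, if_pos rfl, dotProduct_comm] at h
  have hZZu : Z *ᵥ (Zᴴ *ᵥ u) = (σ : ℂ) ^ 2 • u := by
    rw [mulVec_mulVec, hH.mulVec_eigenvectorBasis i, ← Complex.ofReal_pow, Real.sq_sqrt hμ.le]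
    rfl
  have hstar (x : κ → ℂ) : star (Z *ᵥ x) = -(Zᴴ *ᵥ star x) := by
    rw [star_mulVec, ← mulVec_transpose, ← conjTranspose_transpose_eq_transpose_conjTranspose,
      hskew, conjTranspose_neg, neg_mulVec]
  refine ⟨σ, Real.sqrt_pos.mpr hμ, u, (σ : ℂ)⁻¹ • Z *ᵥ star u, hu, ?_, ?_⟩
  · rw [smul_smul, mul_inv_cancel₀ hσ, one_smul]
  · rw [star_smul, mulVec_smul, hstar, star_star, mulVec_neg, hZZu]
    ext k
    simp
    field_simp

lemma exists_isometry_mul_map_star_eq_mul_skewBlock {Z : Matrix κ κ ℂ} (hskew : Zᵀ = -Z)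
    (hZ : Z ≠ 0) :
    ∃ σ : ℝ, 0 < σ ∧ ∃ F : Matrix κ (Fin 2) ℂ,
      Fᴴ * F = 1 ∧ Z * F.map star = F * skewBlock σ := by
  obtain ⟨σ, hσ, u, v, hu, hZu, hZv⟩ := exists_singular_pair_of_transpose_eq_neg hskew hZ
  have hσ0 : (σ : ℂ) ≠ 0 := by exact_mod_cast hσ.ne'
  have huv : star u ⬝ᵥ v = 0 := by
    have h := dotProduct_mulVec_self_eq_zero hskew (star u)
    rwa [hZu, dotProduct_smul, smul_eq_mul, mul_eq_zero, or_iff_right hσ0] at h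
  have hvu : star v ⬝ᵥ u = 0 := by rw [star_dotProduct, huv, star_zero]
  have hvv : star v ⬝ᵥ v = 1 := by
    refine mul_left_cancel₀ hσ0 ?_
    calc (σ : ℂ) * (star v ⬝ᵥ v) = star v ⬝ᵥ (Z *ᵥ star u) := by
          rw [hZu, dotProduct_smul, smul_eq_mul]
      _ = -(Z *ᵥ star v) ⬝ᵥ star u := by
          rw [dotProduct_mulVec, ← mulVec_transpose, hskew, neg_mulVec]
      _ = σ * 1 := by
          rw [hZv, neg_smul, neg_neg, smul_dotProduct, dotProduct_comm, hu, smul_eq_mul]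
  refine ⟨σ, hσ, (of ![v, u])ᵀ, ?_, ?_⟩
  · simp only [dotProduct, Pi.star_apply] at hu huv hvu hvv
    ext a b
    fin_cases a <;> fin_cases b <;> simpa [mul_apply]
  · ext k a
    fin_cases a
    · simpa [mul_apply, skewBlock, mulVec, dotProduct, mul_comm] using congrFun hZv k
    · simpa [mul_apply, skewBlock, mulVec, dotProduct, mul_comm] using congrFun hZu k

lemma exists_unitarilyCongruent_fromBlocks_skewBlock {Z : Matrix (Fin 2 ⊕ ι) (Fin 2 ⊕ ι) ℂ}
    (hskew : Zᵀ = -Z) :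
    ∃ σ : ℝ, 0 ≤ σ ∧ ∃ Z' : Matrix ι ι ℂ,
      UnitarilyCongruent Z (fromBlocks (skewBlock σ) 0 0 Z') := by
  by_cases hZ : Z = 0
  · refine ⟨0, le_rfl, 0, ?_⟩
    rw [hZ, show skewBlock 0 = 0 by ext i j; fin_cases i <;> fin_cases j <;> simp [skewBlock],
      fromBlocks_zero]
    exact .refl 0
  obtain ⟨σ, hσ, F, hF, hZF⟩ := exists_isometry_mul_map_star_eq_mul_skewBlock hskew hZ
  obtain ⟨G, hG⟩ := exists_fromCols_mem_unitaryGroup F hF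
  have hGF : Gᴴ * F = 0 := by
    have h := mem_unitaryGroup_iff'.mp hG
    rw [star_eq_conjTranspose, conjTranspose_fromCols_eq_fromRows_conjTranspose,
      fromRows_mul_fromCols, ← fromBlocks_one, fromBlocks_inj] at h
    exact h.2.2.1
  have hFZF : Fᴴ * Z * F.map star = skewBlock σ := by
    rw [Matrix.mul_assoc, hZF, ← Matrix.mul_assoc, hF, Matrix.one_mul]
  have hGZF : Gᴴ * Z * F.map star = 0 := by
    rw [Matrix.mul_assoc, hZF, ← Matrix.mul_assoc, hGF, Matrix.zero_mul]
  have hFZG : Fᴴ * Z * G.map star = 0 := by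
    rw [← transpose_eq_zero, ← neg_eq_zero, ← hGZF]
    simp only [transpose_mul, hskew, Matrix.mul_assoc, Matrix.mul_neg, Matrix.neg_mul, neg_neg]
    rfl
  refine ⟨σ, hσ.le, Gᴴ * Z * G.map star,
    UnitarilyCongruent.symm ⟨star (fromCols F G), Unitary.star_mem hG, ?_⟩⟩
  rw [star_eq_conjTranspose, conjTranspose_fromCols_eq_fromRows_conjTranspose,
    transpose_fromRows, fromRows_mul, fromRows_mul_fromCols, conjTranspose_transpose,
    conjTranspose_transpose, hFZF, hFZG, hGZF]

end

def finTwoSumEquiv (n ε : ℕ) : Fin 2 ⊕ Fin (2 * n + ε) ≃ Fin (2 * (n + 1) + ε) :=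
  finSumFinEquiv.trans (finCongr (by omega))

@[simp] lemma finTwoSumEquiv_inl_val (n ε : ℕ) (a : Fin 2) :
    (finTwoSumEquiv n ε (.inl a) : ℕ) = a := by
  simp [finTwoSumEquiv]

@[simp] lemma finTwoSumEquiv_inr_val (n ε : ℕ) (i : Fin (2 * n + ε)) :
    (finTwoSumEquiv n ε (.inr i) : ℕ) = 2 + i := by
  simp [finTwoSumEquiv]

lemma typeIIBlockDiag_zero_left (ε : ℕ) (t : Fin 0 → ℝ) : typeIIBlockDiag 0 ε t = 0 := by
  ext i j
  simp [typeIIBlockDiag]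

lemma typeIIBlockDiag_succ (n ε : ℕ) (σ : ℝ) (t : Fin n → ℝ) :
    (typeIIBlockDiag (n + 1) ε (Fin.cons σ t)).submatrix (finTwoSumEquiv n ε)
      (finTwoSumEquiv n ε) = fromBlocks (skewBlock σ) 0 0 (typeIIBlockDiag n ε t) := by
  ext (a | i) (b | j)
  · fin_cases a <;> fin_cases b <;> simp [typeIIBlockDiag, skewBlock]
  · simp only [submatrix_apply, fromBlocks_apply₁₂, typeIIBlockDiag, of_apply]
    rw [dif_neg (by simp; omega), dif_neg (by simp; omega), Matrix.zero_apply]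
  · simp only [submatrix_apply, fromBlocks_apply₂₁, typeIIBlockDiag, of_apply]
    rw [dif_neg (by simp; omega), dif_neg (by simp; omega), Matrix.zero_apply]
  · simp only [submatrix_apply, fromBlocks_apply₂₂, typeIIBlockDiag, of_apply,
      finTwoSumEquiv_inr_val]
    split_ifs <;> (try simp) <;>
      first | omega | exact Fin.cons_succ (α := fun _ => ℝ) σ t ⟨_, by omega⟩

theorem exists_unitarilyCongruent_typeIIBlockDiag {ε : ℕ} (hε : ε ≤ 1) :
    ∀ (n : ℕ) (Z : Matrix (Fin (2 * n + ε)) (Fin (2 * n + ε)) ℂ), Z ∈ typeIIDomain _ →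
      ∃ t : Fin n → ℝ, (∀ j, 0 ≤ t j ∧ t j < 1) ∧
        UnitarilyCongruent Z (typeIIBlockDiag n ε t)
  | 0, Z, hZ => by
    have : Subsingleton (Fin (2 * 0 + ε)) := Fin.subsingleton_iff_le_one.mpr (by omega)
    refine ⟨Fin.elim0, (·.elim0), ?_⟩
    rw [typeIIBlockDiag_zero_left, eq_zero_of_transpose_eq_neg hZ.1]
    exact .refl 0
  | n + 1, Z, hZ => by
    set e := finTwoSumEquiv n ε
    have hZe := submatrix_mem_typeIIDomain e hZ
    obtain ⟨σ, hσ, Z', hZZ'⟩ := exists_unitarilyCongruent_fromBlocks_skewBlock hZe.1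
    obtain ⟨hσ1, hZ'⟩ := fromBlocks_mem_typeIIDomain hσ (hZZ'.symm.mem_typeIIDomain hZe)
    obtain ⟨t, ht, hZ't⟩ := exists_unitarilyCongruent_typeIIBlockDiag hε n Z' hZ'
    refine ⟨Fin.cons σ t, Fin.cases ⟨hσ, hσ1⟩ ht, ?_⟩
    have h := (hZZ'.trans (hZ't.fromBlocks_right _)).submatrix e.symm
    rwa [← typeIIBlockDiag_succ, submatrix_submatrix, submatrix_submatrix, e.self_comp_symm,
      submatrix_id_id, submatrix_id_id] at h

theorem typeII_KA_decomposition_general (n ε : ℕ) (hε : ε = 0 ∨ ε = 1)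
    (Z : Matrix (Fin (2 * n + ε)) (Fin (2 * n + ε)) ℂ)
    (hskew : Zᵀ = -Z) (hZ : (1 - Z * Zᴴ).PosDef) :
    ∃ A ∈ Matrix.unitaryGroup (Fin (2 * n + ε)) ℂ, ∃ t : Fin n → ℝ,
      (∀ j, 0 ≤ t j ∧ t j < 1) ∧ Z = A * typeIIBlockDiag n ε t * Aᵀ := by
  obtain ⟨t, ht, A, hA, hZA⟩ :=
    exists_unitarilyCongruent_typeIIBlockDiag (by omega) n Z ⟨hskew, hZ⟩
  exact ⟨A, hA, t, ht, hZA⟩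

/-- **KA-decomposition for the type II domain.**
Let `m = 2n + ε` with `n ≥ 1` and `ε ∈ {0, 1}`, and let `Z` be a skew-symmetric complex
`m × m` matrix (`Zᵀ = -Z`) with `I_m - Z Z*` positive definite. Then there exist a
unitary `A ∈ U(m)` and `t₁, …, t_n ∈ [0,1)` with `Z = A ⬝ D(t) ⬝ Aᵀ`, where `D(t)` is
block-diagonal with `j`-th `2 × 2` block `[[0, t_j], [-t_j, 0]]` and, when `ε = 1`,
vanishing last row and column. -/
theorem typeII_KA_decomposition (n ε : ℕ) (hn : 1 ≤ n) (hε : ε = 0 ∨ ε = 1)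
    (Z : Matrix (Fin (2 * n + ε)) (Fin (2 * n + ε)) ℂ)
    (hskew : Zᵀ = -Z) (hZ : (1 - Z * Zᴴ).PosDef) :
    ∃ A ∈ Matrix.unitaryGroup (Fin (2 * n + ε)) ℂ, ∃ t : Fin n → ℝ,
      (∀ j, 0 ≤ t j ∧ t j < 1) ∧ Z = A * typeIIBlockDiag n ε t * Aᵀ :=
  typeII_KA_decomposition_general n ε hε Z hskew hZ
end

section
/- Let λ > 1 be real and let ψ : 𝔻 → ℂ be bounded and measurable. Then ψ is radial (i.e., for every θ ∈ ℝ, ψ(e^{iθ}z) = ψ(z) for almost every z ∈ 𝔻) if and only if for all integers j, k ≥ 0 with j ≠ k one has ∫_𝔻 ψ(z) z^j (conj z)^k (1−|z|²)^{λ−2} dA(z) = 0. -/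
/-!
The substitution `z ↦ e^{-iθ} z` preserves the weighted measure `(1 - |z|²)^{λ-2} dA` on `𝔻`,
so rotating the symbol by `θ` multiplies the coefficient `⟨ψ z^j, z^k⟩_λ` by `e^{i(k-j)θ}`. For a radial `ψ` and `j ≠ k`, taking `(k-j)θ = π` forces the
coefficient to vanish. Conversely, if the off-diagonal coefficients vanish, then all moments
`∫ z^j z̄^k (ψ(e^{iθ}z) - ψ(z)) (1 - |z|²)^{λ-2} dA` vanish; since polynomials in `z` and `z̄` are
dense in `C(𝔻̄)` (Stone–Weierstrass), the integrable function `(ψ(e^{iθ}·) - ψ) (1 - |·|²)^{λ-2}`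
is zero a.e., and the weight is positive on `𝔻`.
-/

open MeasureTheory
open Complex

/-- The open unit disc `𝔻 = {z ∈ ℂ : |z| < 1}`. -/
def unitDisc : Set ℂ := {z | ‖z‖ < 1}

open Set Metric

theorem ContinuousMap.dense_span_restrict_id_pow_mul_star_pow {𝕜 : Type*} [RCLike 𝕜]
    {K : Set 𝕜} [CompactSpace K] :
    Dense (Submodule.span 𝕜 (range fun n : ℕ × ℕ =>
      (ContinuousMap.restrict K (.id 𝕜)) ^ n.1 * star (ContinuousMap.restrict K (.id 𝕜)) ^ n.2) :
        Set C(K, 𝕜)) := by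
  set X := ContinuousMap.restrict K (.id 𝕜)
  have hspan : Submodule.span 𝕜 (range fun n : ℕ × ℕ => X ^ n.1 * star X ^ n.2) =
      Subalgebra.toSubmodule (StarAlgebra.adjoin 𝕜 {X}).toSubalgebra := by
    rw [StarAlgebra.adjoin_toSubalgebra, Algebra.adjoin_eq_span, Set.star_singleton,
      Set.singleton_union]
    congr 1
    ext f
    simp [Submonoid.mem_closure_pair]
  rw [hspan, dense_iff_closure_eq]
  change closure ((StarAlgebra.adjoin 𝕜 {X} : StarSubalgebra 𝕜 C(K, 𝕜)) : Set C(K, 𝕜)) = univ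
  rw [← StarSubalgebra.topologicalClosure_coe, ← StarAlgebra.elemental,
    ContinuousMap.elemental_id_eq_top, StarSubalgebra.coe_top]

section IntegralMul

variable {X : Type*} [TopologicalSpace X] [CompactSpace X] [MeasurableSpace X]
  [OpensMeasurableSpace X] {μ : Measure X} {G : X → ℂ}

theorem MeasureTheory.Integrable.continuousMap_mul (hG : Integrable G μ) (f : C(X, ℂ)) :
    Integrable (fun x => f x * G x) μ :=
  hG.bdd_mul f.continuous.aestronglyMeasurable (ae_of_all _ f.norm_coe_le_norm)

noncomputable def integralMulCLM (hG : Integrable G μ) : C(X, ℂ) →L[ℂ] ℂ :=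
  LinearMap.mkContinuous
    { toFun := fun f => ∫ x, f x * G x ∂μ
      map_add' := fun f g => by
        simp only [ContinuousMap.add_apply, add_mul]
        exact integral_add (hG.continuousMap_mul f) (hG.continuousMap_mul g)
      map_smul' := fun c f => by
        simp only [ContinuousMap.smul_apply, smul_eq_mul, mul_assoc, integral_const_mul,
          RingHom.id_apply] }
    (∫ x, ‖G x‖ ∂μ) fun f => by
      calc ‖∫ x, f x * G x ∂μ‖ ≤ ∫ x, ‖f‖ * ‖G x‖ ∂μ :=
            norm_integral_le_of_norm_le (hG.norm.const_mul _) (ae_of_all _ fun x => by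
              rw [norm_mul]; gcongr; exact f.norm_coe_le_norm x)
        _ = (∫ x, ‖G x‖ ∂μ) * ‖f‖ := by rw [integral_const_mul, mul_comm]

end IntegralMul

theorem ae_restrict_eq_zero_of_integral_pow_mul_conj_pow_mul_eq_zero {K : Set ℂ}
    (hK : IsCompact K) {G : ℂ → ℂ} (hG : IntegrableOn G K)
    (h : ∀ j k : ℕ, ∫ z in K, z ^ j * (starRingEnd ℂ) z ^ k * G z = 0) :
    ∀ᵐ z ∂volume.restrict K, G z = 0 := by
  have : CompactSpace K := isCompact_iff_compactSpace.mp hK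
  have hKm : MeasurableSet K := hK.isClosed.measurableSet
  set L := integralMulCLM ((integrableOn_iff_comap_subtypeVal hKm).mp hG)
  have hL_restrict (F : ℂ → ℂ) (hF : Continuous F) :
      L ((ContinuousMap.mk F hF).restrict K) = ∫ z in K, F z * G z :=
    integral_subtype_comap hKm fun z => F z * G z
  have hL : L = 0 := by
    refine ContinuousLinearMap.ext_on ContinuousMap.dense_span_restrict_id_pow_mul_star_pow ?_
    rintro _ ⟨⟨j, k⟩, rfl⟩
    rw [zero_apply, ← h j k, ← hL_restrict _ (by fun_prop)]
    rfl
  have hindicator : ∀ᵐ z, K.indicator G z = 0 := by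
    refine ae_eq_zero_of_integral_contDiff_smul_eq_zero
      (hG.integrable_indicator hKm).locallyIntegrable fun φ hφ _ => ?_
    calc ∫ z, φ z • K.indicator G z = ∫ z in K, (φ z : ℂ) * G z := by
          rw [← integral_indicator hKm]
          congr 1 with z
          by_cases hz : z ∈ K <;> simp [hz, Complex.real_smul]
      _ = 0 := by rw [← hL_restrict (fun z => (φ z : ℂ)) (by fun_prop), hL, zero_apply]
  filter_upwards [ae_restrict_of_ae hindicator, ae_restrict_mem hKm] with z hz hzK
  rwa [indicator_of_mem hzK] at hz

theorem setIntegral_ball_comp_linearIsometryEquiv {E F : Type*} [NormedAddCommGroup E]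
    [InnerProductSpace ℝ E] [FiniteDimensional ℝ E] [MeasurableSpace E] [BorelSpace E]
    [NormedAddCommGroup F] [NormedSpace ℝ F] (e : E ≃ₗᵢ[ℝ] E) (r : ℝ) (f : E → F) :
    ∫ x in ball 0 r, f (e x) = ∫ x in ball 0 r, f x := by
  have := e.measurePreserving.setIntegral_preimage_emb e.toHomeomorph.measurableEmbedding f
    (ball 0 r)
  rwa [e.preimage_ball, map_zero] at this

theorem integrableOn_mul_one_sub_sq_rpow {s : ℝ} (hs : -1 < s) :
    IntegrableOn (fun r : ℝ => r * (1 - r ^ 2) ^ s) (Ioo 0 1) := by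
  -- a nonnegative derivative of a function continuous on `[0, 1]` is integrable
  have hs1 : s + 1 ≠ 0 := by linarith
  refine (intervalIntegral.integrableOn_deriv_of_nonneg
    (g := fun r => -(1 - r ^ 2) ^ (s + 1) / (2 * (s + 1)))
    (g' := fun r => r * (1 - r ^ 2) ^ s)
    ?_ (fun r hr => ?_) (fun r hr => ?_)).mono_set Ioo_subset_Ioc_self
  · exact ContinuousOn.div_const (ContinuousOn.neg (ContinuousOn.rpow_const (by fun_prop)
      fun _ _ => Or.inr (by linarith))) _
  · have h0 : 0 < 1 - r ^ 2 := by nlinarith [hr.1, hr.2]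
    refine ((((hasDerivAt_pow 2 r).const_sub 1).rpow_const (p := s + 1)
      (Or.inl h0.ne')).neg.div_const (2 * (s + 1))).congr_deriv ?_
    rw [add_sub_cancel_right]
    field_simp
    ring
  · have h0 : 0 < 1 - r ^ 2 := by nlinarith [hr.1, hr.2]
    exact mul_nonneg hr.1.le (Real.rpow_nonneg h0.le s)

theorem integrableOn_one_sub_norm_sq_rpow {s : ℝ} (hs : -1 < s) :
    IntegrableOn (fun z : ℂ => (1 - ‖z‖ ^ 2) ^ s) (ball 0 1) := by
  rw [integrableOn_fun_norm_addHaar volume (f := fun r => (1 - r ^ 2) ^ s),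
    Complex.finrank_real_complex]
  simpa using integrableOn_mul_one_sub_sq_rpow hs

theorem unitDisc_eq_ball : unitDisc = ball 0 1 := by
  ext z
  simp [unitDisc]

theorem measurableSet_unitDisc : MeasurableSet unitDisc :=
  unitDisc_eq_ball ▸ measurableSet_ball

theorem unitDisc_ae_eq_closedBall : unitDisc =ᵐ[volume] closedBall (0 : ℂ) 1 := by
  rw [unitDisc_eq_ball, ← ball_union_sphere]
  exact (union_ae_eq_left_of_ae_eq_empty
    (ae_eq_empty.mpr (Measure.addHaar_sphere volume 0 1))).symm

theorem setIntegral_unitDisc_comp_exp_mul (θ : ℝ) (f : ℂ → ℂ) :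
    ∫ z in unitDisc, f (exp (θ * I) * z) = ∫ z in unitDisc, f z := by
  simpa [unitDisc_eq_ball, rotation_apply, Circle.coe_exp] using
    setIntegral_ball_comp_linearIsometryEquiv (rotation (Circle.exp θ)) 1 f

theorem integrableOn_unitDisc_mul_weight {lam : ℝ} (hlam : 1 < lam) {f : ℂ → ℂ} {C : ℝ}
    (hf : AEStronglyMeasurable f (volume.restrict unitDisc)) (hC : ∀ z ∈ unitDisc, ‖f z‖ ≤ C) :
    IntegrableOn (fun z => f z * ((1 - ‖z‖ ^ 2) ^ (lam - 2) : ℝ)) unitDisc := by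
  have hw := (integrableOn_one_sub_norm_sq_rpow (s := lam - 2) (by linarith)).ofReal (𝕜 := ℂ)
  rw [← unitDisc_eq_ball] at hw
  exact hw.bdd_mul hf ((ae_restrict_iff' measurableSet_unitDisc).mpr (ae_of_all _ hC))

/-- Up to the normalising constant of the weighted Bergman measure, the matrix coefficient
`⟨T_ψ z^j, z^k⟩_λ` of the Toeplitz operator. -/
noncomputable def toeplitzCoeff (lam : ℝ) (ψ : ℂ → ℂ) (j k : ℕ) : ℂ :=
  ∫ z in unitDisc, ψ z * z ^ j * (starRingEnd ℂ) z ^ k * ((1 - ‖z‖ ^ 2) ^ (lam - 2) : ℝ)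

theorem toeplitzCoeff_comp_exp_mul (lam θ : ℝ) (ψ : ℂ → ℂ) (j k : ℕ) :
    toeplitzCoeff lam (fun z => ψ (exp (θ * I) * z)) j k =
      exp ((k - j : ℂ) * θ * I) * toeplitzCoeff lam ψ j k := by
  set u := exp (θ * I)
  have hu : (starRingEnd ℂ) u * u = 1 := by
    rw [conj_mul', norm_exp_ofReal_mul_I, ofReal_one, one_pow]
  have hconj : (starRingEnd ℂ) u = exp (-θ * I) := by
    rw [← exp_conj, map_mul, conj_ofReal, conj_I, neg_mul, mul_neg]
  set H : ℂ → ℂ := fun z => ψ z * ((starRingEnd ℂ) u * z) ^ j * (u * (starRingEnd ℂ) z) ^ k *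
    ((1 - ‖z‖ ^ 2) ^ (lam - 2) : ℝ)
  calc toeplitzCoeff lam (fun z => ψ (u * z)) j k = ∫ z in unitDisc, H (u * z) := by
        refine integral_congr_ae (ae_of_all _ fun z => ?_)
        have hz : (starRingEnd ℂ) u * (u * z) = z := by rw [← mul_assoc, hu, one_mul]
        have hz' : u * (starRingEnd ℂ) (u * z) = (starRingEnd ℂ) z := by
          rw [map_mul, ← mul_assoc, mul_comm u, hu, one_mul]
        have hnorm : ‖u * z‖ = ‖z‖ := by rw [norm_mul, norm_exp_ofReal_mul_I, one_mul]
        simp only [H, hz, hz', hnorm]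
    _ = ∫ z in unitDisc, H z := setIntegral_unitDisc_comp_exp_mul θ H
    _ = (starRingEnd ℂ) u ^ j * u ^ k * toeplitzCoeff lam ψ j k := by
        rw [toeplitzCoeff, ← integral_const_mul]
        congr 1 with z
        ring
    _ = exp ((k - j : ℂ) * θ * I) * toeplitzCoeff lam ψ j k := by
        rw [hconj, ← exp_nat_mul, ← exp_nat_mul, ← exp_add]
        ring_nf

theorem integrableOn_toeplitzCoeff_integrand {lam : ℝ} (hlam : 1 < lam) {ψ : ℂ → ℂ} {C : ℝ}
    (hψ : AEStronglyMeasurable ψ (volume.restrict unitDisc)) (hC : ∀ z, ‖ψ z‖ ≤ C) (j k : ℕ) :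
    IntegrableOn (fun z => ψ z * z ^ j * (starRingEnd ℂ) z ^ k *
      ((1 - ‖z‖ ^ 2) ^ (lam - 2) : ℝ)) unitDisc := by
  refine integrableOn_unitDisc_mul_weight hlam (C := C) (by fun_prop) fun z hz => ?_
  have hz1 : ‖z‖ ≤ 1 := le_of_lt hz
  calc ‖ψ z * z ^ j * (starRingEnd ℂ) z ^ k‖ = ‖ψ z‖ * (‖z‖ ^ j * ‖z‖ ^ k) := by
        simp only [norm_mul, norm_pow, RCLike.norm_conj, mul_assoc]
    _ ≤ ‖ψ z‖ * 1 := by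
        gcongr
        exact mul_le_one₀ (pow_le_one₀ (norm_nonneg z) hz1) (by positivity)
          (pow_le_one₀ (norm_nonneg z) hz1)
    _ ≤ C := (mul_one _).trans_le (hC z)

theorem toeplitzCoeff_sub {lam : ℝ} (hlam : 1 < lam) {ψ φ : ℂ → ℂ} {C : ℝ}
    (hψ : AEStronglyMeasurable ψ (volume.restrict unitDisc))
    (hφ : AEStronglyMeasurable φ (volume.restrict unitDisc))
    (hψC : ∀ z, ‖ψ z‖ ≤ C) (hφC : ∀ z, ‖φ z‖ ≤ C) (j k : ℕ) :
    toeplitzCoeff lam (ψ - φ) j k = toeplitzCoeff lam ψ j k - toeplitzCoeff lam φ j k := by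
  rw [toeplitzCoeff, toeplitzCoeff, toeplitzCoeff,
    ← integral_sub (integrableOn_toeplitzCoeff_integrand hlam hψ hψC j k)
      (integrableOn_toeplitzCoeff_integrand hlam hφ hφC j k)]
  congr 1 with z
  simp only [Pi.sub_apply]
  ring

theorem toeplitzCoeff_eq_zero_of_radial {lam : ℝ} {ψ : ℂ → ℂ}
    (hrad : ∀ θ : ℝ, ∀ᵐ z ∂(volume.restrict unitDisc), ψ (exp (θ * I) * z) = ψ z)
    {j k : ℕ} (hjk : j ≠ k) : toeplitzCoeff lam ψ j k = 0 := by
  set θ : ℝ := Real.pi / (k - j)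
  have hkj : (k - j : ℂ) ≠ 0 := sub_ne_zero.mpr (Nat.cast_injective.ne hjk.symm)
  have hradθ : toeplitzCoeff lam (fun z => ψ (exp (θ * I) * z)) j k = toeplitzCoeff lam ψ j k :=
    integral_congr_ae (by filter_upwards [hrad θ] with z hz using by rw [hz])
  have hangle : (k - j : ℂ) * θ * I = Real.pi * I := by
    simp only [θ]
    push_cast
    field_simp
  have := toeplitzCoeff_comp_exp_mul lam θ ψ j k
  rw [hradθ, hangle, exp_pi_mul_I] at this
  linear_combination this / 2

theorem ae_radial_of_toeplitzCoeff_eq_zero {lam : ℝ} (hlam : 1 < lam) {ψ : ℂ → ℂ}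
    (hmeas : Measurable ψ) {C : ℝ} (hC : ∀ z, ‖ψ z‖ ≤ C)
    (hvan : ∀ j k : ℕ, j ≠ k → toeplitzCoeff lam ψ j k = 0) (θ : ℝ) :
    ∀ᵐ z ∂(volume.restrict unitDisc), ψ (exp (θ * I) * z) = ψ z := by
  set ψθ : ℂ → ℂ := fun z => ψ (exp (θ * I) * z)
  have hψθ : AEStronglyMeasurable ψθ (volume.restrict unitDisc) :=
    (hmeas.comp (measurable_const_mul _)).aestronglyMeasurable
  have hψ : AEStronglyMeasurable ψ (volume.restrict unitDisc) := hmeas.aestronglyMeasurable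
  have hD := Measure.restrict_congr_set unitDisc_ae_eq_closedBall
  set G : ℂ → ℂ := fun z => (ψθ z - ψ z) * ((1 - ‖z‖ ^ 2) ^ (lam - 2) : ℝ)
  have hG : IntegrableOn G (closedBall 0 1) := by
    rw [IntegrableOn, ← hD]
    exact integrableOn_unitDisc_mul_weight hlam (C := C + C) (hψθ.sub hψ)
      fun z _ => (norm_sub_le _ _).trans (add_le_add (hC _) (hC z))
  have hmoments (j k : ℕ) : ∫ z in closedBall 0 1, z ^ j * (starRingEnd ℂ) z ^ k * G z = 0 := by
    rw [← hD]
    calc _ = toeplitzCoeff lam (ψθ - ψ) j k := by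
          congr 1 with z
          simp only [G, Pi.sub_apply]
          ring
      _ = (exp ((k - j : ℂ) * θ * I) - 1) * toeplitzCoeff lam ψ j k := by
          rw [toeplitzCoeff_sub hlam hψθ hψ (fun _ => hC _) hC, toeplitzCoeff_comp_exp_mul]
          ring
      _ = 0 := by
          rcases eq_or_ne j k with rfl | hjk
          · simp
          · rw [hvan j k hjk, mul_zero]
  have hG0 := ae_restrict_eq_zero_of_integral_pow_mul_conj_pow_mul_eq_zero
    (isCompact_closedBall 0 1) hG hmoments
  rw [← hD] at hG0
  filter_upwards [hG0, ae_restrict_mem measurableSet_unitDisc] with z hz hzD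
  have hw : ((1 - ‖z‖ ^ 2) ^ (lam - 2) : ℝ) ≠ 0 := by
    have : ‖z‖ < 1 := hzD
    exact (Real.rpow_pos_of_pos (by nlinarith [norm_nonneg z]) _).ne'
  exact sub_eq_zero.mp ((mul_eq_zero.mp hz).resolve_right (ofReal_ne_zero.mpr hw))

/-- **Radiality of the symbol is equivalent to vanishing of the off-diagonal Toeplitz
coefficients (unit disc).** For `λ > 1` and a bounded measurable `ψ : 𝔻 → ℂ`, `ψ` is
radial (for every `θ ∈ ℝ`, `ψ(e^{iθ} z) = ψ(z)` for a.e. `z ∈ 𝔻`) if and only if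
`∫_𝔻 ψ(z) z^j (conj z)^k (1-|z|²)^{λ-2} dA(z) = 0` for all `j ≠ k` in `ℕ`. -/
theorem unitDisc_radial_iff_offdiagonal_vanish (lam : ℝ) (hlam : 1 < lam)
    (ψ : ℂ → ℂ) (hmeas : Measurable ψ) (hbd : ∃ C : ℝ, ∀ z, ‖ψ z‖ ≤ C) :
    (∀ θ : ℝ, ∀ᵐ z ∂(volume.restrict unitDisc),
        ψ (Complex.exp (θ * Complex.I) * z) = ψ z) ↔
      (∀ j k : ℕ, j ≠ k →
        ∫ z in unitDisc, ψ z * z ^ j * (starRingEnd ℂ) z ^ k *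
          ((1 - ‖z‖ ^ 2) ^ (lam - 2) : ℝ) = 0) := by
  obtain ⟨C, hC⟩ := hbd
  exact ⟨fun hrad j k hjk => toeplitzCoeff_eq_zero_of_radial hrad hjk,
    fun hvan => ae_radial_of_toeplitzCoeff_eq_zero hlam hmeas hC hvan⟩
end
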